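/- Let K ⊂ ℂ be a compact polynomially convex proper subset of the closed unit disk. Then there exists a Möbius transformation g of the unit disk (of the form g(z) = \bar{c}(z − tc)/(1 − t\bar{c}z) for some |c| = 1 and t ∈ (0,1)) such that g(K) ⊂ {z : |z| ≤ 1 and Re z ≤ 0}. -/

import Mathlib

open Complex Metric Set ComplexConjugate

/-! By the maximum principle the polynomial hull of the unit circle is the closed disk, so a
polynomially convex proper subset `K` of the disk misses some point `c` of the circle, and then
avoids a neighbourhood of `c`. The Möbius maps `z ↦ c̄ (z - t c) / (1 - t c̄ z)` preserve the disk,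
and as `t → 1` they push everything outside a fixed neighbourhood of `c` towards `-1`; for `t`
close enough to `1` the image of `K` lies in the disk of radius `1` about `-1`, hence in the
left half-plane. -/

theorem closedBall_subset_of_sphere_subset {K : Set ℂ}
    (hpc : ∀ z ∉ K, ∃ p : Polynomial ℂ, ∀ w ∈ K, ‖p.eval w‖ < ‖p.eval z‖)
    {a : ℂ} {r : ℝ} (hr : 0 < r) (hK : sphere a r ⊆ K) : closedBall a r ⊆ K := by
  intro z hz
  by_contra hzK
  obtain ⟨p, hp⟩ := hpc z hzK
  obtain ⟨w, hw, hmax⟩ := exists_mem_frontier_isMaxOn_norm isBounded_ball (nonempty_ball.2 hr)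
    p.differentiable.diffContOnCl
  rw [frontier_ball a hr.ne'] at hw
  rw [closure_ball a hr.ne'] at hmax
  exact (hp w (hK hw)).not_ge (hmax hz)

theorem normSq_one_sub_conj_mul_sub_normSq_sub (a w : ℂ) :
    normSq (1 - conj a * w) - normSq (w - a) = (1 - normSq a) * (1 - normSq w) := by
  simp only [normSq_apply, sub_re, sub_im, mul_re, mul_im, one_re, one_im, conj_re, conj_im]
  ring

theorem norm_sub_div_one_sub_conj_mul_le_one {a w : ℂ} (ha : ‖a‖ ≤ 1) (hw : ‖w‖ ≤ 1) :
    ‖(w - a) / (1 - conj a * w)‖ ≤ 1 := by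
  have hsq : normSq (w - a) ≤ normSq (1 - conj a * w) := by
    have := normSq_one_sub_conj_mul_sub_normSq_sub a w
    have hna : normSq a ≤ 1 := by rw [normSq_eq_norm_sq]; nlinarith [norm_nonneg a]
    have hnw : normSq w ≤ 1 := by rw [normSq_eq_norm_sq]; nlinarith [norm_nonneg w]
    nlinarith
  rw [norm_div]
  refine div_le_one_of_le₀ ?_ (norm_nonneg _)
  rw [← sq_le_sq₀ (norm_nonneg _) (norm_nonneg _), ← normSq_eq_norm_sq, ← normSq_eq_norm_sq]
  exact hsq

theorem re_le_zero_of_norm_add_one_le_one {g : ℂ} (hg : ‖g + 1‖ ≤ 1) : g.re ≤ 0 := by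
  have := (re_le_norm (g + 1)).trans hg
  simp only [add_re, one_re] at this
  linarith

/-- The image lies in the disk of radius `1` about `-1`: the value plus one is
`(1 - t) (1 + w) / (1 - t w)`, and `‖1 - t w‖ ≥ ‖1 - w‖ - (1 - t) ≥ 2 (1 - t)`. -/
theorem re_sub_div_one_sub_mul_le_zero {t : ℝ} {w : ℂ} (ht : t < 1) (hw : ‖w‖ ≤ 1)
    (hw1 : 3 * (1 - t) ≤ ‖w - 1‖) : ((w - t) / (1 - t * w)).re ≤ 0 := by
  have hs : 0 < 1 - t := sub_pos.2 ht
  have hden : 2 * (1 - t) ≤ ‖1 - t * w‖ :=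
    calc 2 * (1 - t) ≤ ‖w - 1‖ - (1 - t) * ‖w‖ := by nlinarith
      _ = ‖(1 - t * w) - ((1 - t : ℝ) : ℂ) * w‖ - ‖((1 - t : ℝ) : ℂ) * w‖ := by
        rw [norm_mul, norm_real, Real.norm_of_nonneg hs.le, ← norm_neg]
        congr 2
        push_cast
        ring
      _ ≤ ‖1 - t * w‖ := by linarith [norm_sub_le (1 - t * w) (((1 - t : ℝ) : ℂ) * w)]
  have hden0 : (1 : ℂ) - t * w ≠ 0 := norm_pos_iff.1 (by linarith)
  have hnum : ‖1 + w‖ ≤ 2 := (norm_add_le _ _).trans (by rw [norm_one]; linarith)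
  apply re_le_zero_of_norm_add_one_le_one
  have hg : (w - t) / (1 - t * w) + 1 = ((1 - t : ℝ) : ℂ) * (1 + w) / (1 - t * w) := by
    rw [div_add_one hden0]
    push_cast
    ring
  rw [hg, norm_div, norm_mul, norm_real, Real.norm_of_nonneg hs.le]
  refine div_le_one_of_le₀ ?_ (norm_nonneg _)
  nlinarith

theorem conj_mul_eq_one_of_norm_eq_one {c : ℂ} (hc : ‖c‖ = 1) : conj c * c = 1 := by
  rw [conj_mul', hc]
  norm_num

theorem conj_mul_sub_div_eq {c : ℂ} (hc : ‖c‖ = 1) (z : ℂ) (t : ℝ) :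
    conj c * (z - t * c) / (1 - t * conj c * z) = (conj c * z - t) / (1 - t * (conj c * z)) := by
  rw [mul_sub, mul_left_comm, conj_mul_eq_one_of_norm_eq_one hc, mul_one, mul_assoc]

theorem norm_conj_mul {c : ℂ} (hc : ‖c‖ = 1) (z : ℂ) : ‖conj c * z‖ = ‖z‖ := by
  rw [norm_mul, norm_conj, hc, one_mul]

theorem norm_conj_mul_sub_one {c : ℂ} (hc : ‖c‖ = 1) (z : ℂ) : ‖conj c * z - 1‖ = ‖z - c‖ := by
  rw [← conj_mul_eq_one_of_norm_eq_one hc, ← mul_sub, norm_conj_mul hc]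

/-- Lemma 2.2: a compact polynomially convex proper subset of the closed unit disk can be
moved by a Möbius transformation of the disk into the left half of the closed disk. -/
theorem moebius_moves_into_left_half_disk
    (K : Set ℂ) (hKc : IsCompact K) (hKsub : K ⊆ closedBall (0 : ℂ) 1)
    (hKne : K ≠ closedBall (0 : ℂ) 1)
    (hpc : ∀ z ∉ K, ∃ p : Polynomial ℂ,
      ∀ w ∈ K, ‖p.eval w‖ < ‖p.eval z‖) :
    ∃ (c : ℂ) (t : ℝ), ‖c‖ = 1 ∧ t ∈ Set.Ioo (0 : ℝ) 1 ∧
      ∀ z ∈ K,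
        ((starRingEnd ℂ) c * (z - t * c) / (1 - t * (starRingEnd ℂ) c * z)) ∈
          {w : ℂ | ‖w‖ ≤ 1 ∧ w.re ≤ 0} := by
  obtain ⟨c, hc, hcK⟩ : ∃ c ∈ sphere (0 : ℂ) 1, c ∉ K := by
    by_contra! h
    exact hKne (hKsub.antisymm (closedBall_subset_of_sphere_subset hpc one_pos h))
  rw [mem_sphere_zero_iff_norm] at hc
  obtain ⟨ε, hε, hεK⟩ := Metric.isOpen_iff.1 hKc.isClosed.isOpen_compl c hcK
  obtain ⟨s, hs0, hs⟩ := exists_between (lt_min (div_pos hε three_pos) one_pos)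
  have hs1 := hs.trans_le (min_le_right _ _)
  have hsε := hs.trans_le (min_le_left _ _)
  refine ⟨c, 1 - s, hc, ⟨by linarith, by linarith⟩, fun z hz => ?_⟩
  have hz1 : ‖conj c * z‖ ≤ 1 := by
    rw [norm_conj_mul hc]
    simpa using hKsub hz
  have hzc : ε ≤ ‖conj c * z - 1‖ := by
    rw [norm_conj_mul_sub_one hc, ← dist_eq]
    exact not_lt.1 fun h => hεK (mem_ball.2 h) hz
  have ht : ‖((1 - s : ℝ) : ℂ)‖ ≤ 1 := by
    rw [norm_real, Real.norm_of_nonneg (by linarith)]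
    linarith
  rw [conj_mul_sub_div_eq hc]
  exact ⟨by simpa using norm_sub_div_one_sub_conj_mul_le_one ht hz1,
    re_sub_div_one_sub_mul_le_zero (by linarith) hz1 (by linarith)⟩
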